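/- Let G be a bidirected graph without tips. If G has a cycloid with an exceptional vertex (i.e., a cycloid in which exactly one vertex fails sign alternation), then G has no feedback edge: for every edge e of G, the graph G − e still contains a cycloid. -/

import Mathlib

/-!
Bidirected graphs.  A vertex-side is a vertex with a sign (`true` = `+`, `false` = `−`);
a bidirected edge is an unordered pair of vertex-sides (an element of `Sym2 (V × Bool)`).
-/

namespace Paper

variable {V : Type}

/-- A vertex-side: a vertex together with a sign (`true` = `+`, `false` = `−`). -/
abbrev Side (V : Type) := V × Bool

/-- A bidirected graph on the vertex type `V`: a vertex set together with a set of
bidirected edges, each an unordered pair of vertex-sides with endpoints in `verts`. -/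
structure BDGraph (V : Type) where
  verts : Set V
  E : Set (Sym2 (Side V))
  wf : ∀ e ∈ E, ∀ x ∈ e, Prod.fst x ∈ verts

namespace BDGraph

/-- `(u, α)` is a vertex-side of `G`, i.e. some edge of `G` is incident to `u`
with sign `α`. -/
def HasSide (G : BDGraph V) (u : V) (α : Bool) : Prop :=
  ∃ e ∈ G.E, (u, α) ∈ e

/-- Adjacency in the underlying undirected graph `U(G)` (signs ignored). -/
def uadj (G : BDGraph V) (a b : V) : Prop :=
  ∃ e ∈ G.E, ∃ σ τ : Bool, e = s((a, σ), (b, τ))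

/-- Connectivity (reachability) in the underlying undirected graph `U(G)`. -/
def uReach (G : BDGraph V) (a b : V) : Prop :=
  Relation.ReflTransGen G.uadj a b

/-- `v` is a tip of `G`: no two edges of `G` are incident to `v` with different signs. -/
def IsTip (G : BDGraph V) (v : V) : Prop :=
  ∀ e ∈ G.E, ∀ f ∈ G.E, ∀ σ : Bool, (v, σ) ∈ e → (v, !σ) ∈ f → False

/-- `v` is a tip of `G` with sign `α`: every edge of `G` incident to `v` carries the
sign `α` at `v`. -/
def IsTipWith (G : BDGraph V) (v : V) (α : Bool) : Prop :=
  ∀ e ∈ G.E, ∀ σ : Bool, (v, σ) ∈ e → σ = α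

/-- Deletion of the vertex `x` (and all edges incident to it). -/
def deleteVert (G : BDGraph V) (x : V) : BDGraph V where
  verts := G.verts \ {x}
  E := {e | e ∈ G.E ∧ ∀ y : Side V, y ∈ e → y.1 ≠ x}
  wf := by
    rintro e ⟨he, hne⟩ y hy
    exact ⟨G.wf e he y hy, hne y hy⟩

/-- Deletion of a single edge. -/
def deleteEdge (G : BDGraph V) (e₀ : Sym2 (Side V)) : BDGraph V where
  verts := G.verts
  E := G.E \ {e₀}
  wf := by
    rintro e ⟨he, -⟩ y hy
    exact G.wf e he y hy

/-- `x` is a cutvertex of (the underlying undirected graph of) `G`: some two other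
vertices are connected in `G` but no longer connected after deleting `x`. -/
def IsCutvertex (G : BDGraph V) (x : V) : Prop :=
  x ∈ G.verts ∧ ∃ a ∈ G.verts, ∃ b ∈ G.verts, a ≠ x ∧ b ≠ x ∧
    G.uReach a b ∧ ¬ (G.deleteVert x).uReach a b

/-- `G` is connected (underlying undirected graph, nonempty). -/
def Conn (G : BDGraph V) : Prop :=
  G.verts.Nonempty ∧ ∀ a ∈ G.verts, ∀ b ∈ G.verts, G.uReach a b

/-- `H` is a subgraph of `G`. -/
def IsSubgraphOf (H G : BDGraph V) : Prop :=
  H.verts ⊆ G.verts ∧ H.E ⊆ G.E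

end BDGraph

/-! ### Splitting a pair of vertex-sides

Splitting the vertex-side `u α` detaches all edges incident to `u` with the opposite
sign `!α` and reattaches them to a new vertex `u'`.  We split the two vertex-sides
`u α` and `v β` (`u ≠ v`) simultaneously, realising the two new vertices as `Sum.inr u`
and `Sum.inr v` in the vertex type `V ⊕ V` (original vertices are `Sum.inl`). -/

open Classical in
/-- Where each vertex-side goes under the splitting of `u α` and `v β`. -/
noncomputable def splitMap (u : V) (α : Bool) (v : V) (β : Bool) :
    Side V → Side (V ⊕ V) :=
  fun x =>
    if x = (u, !α) then (Sum.inr u, !α)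
    else if x = (v, !β) then (Sum.inr v, !β)
    else (Sum.inl x.1, x.2)

/-- The graph obtained from `G` by splitting the vertex-sides `u α` and `v β`. -/
noncomputable def BDGraph.split2 (G : BDGraph V) (u : V) (α : Bool) (v : V) (β : Bool) :
    BDGraph (V ⊕ V) where
  verts := (Sum.inl '' G.verts) ∪ {Sum.inr u, Sum.inr v}
  E := Sym2.map (splitMap u α v β) '' G.E
  wf := by
    rintro e ⟨f, hf, rfl⟩ x hx
    rw [Sym2.mem_map] at hx
    obtain ⟨y, hy, rfl⟩ := hx
    by_cases h1 : y = (u, !α)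
    · simp only [splitMap, if_pos h1]
      simp
    · by_cases h2 : y = (v, !β)
      · simp only [splitMap, if_neg h1, if_pos h2]
        simp
      · simp only [splitMap, if_neg h1, if_neg h2]
        exact Set.mem_union_left _ ⟨y.1, G.wf f hf y hy, rfl⟩

/-- The pair of vertex-sides `{u α, v β}` is separable in `G`: after splitting `u α`
and `v β`, there is a connected component containing `u` and `v` but neither of the
two new vertices `u'`, `v'`. -/
noncomputable def Separable (G : BDGraph V) (u : V) (α : Bool) (v : V) (β : Bool) : Prop :=
  u ≠ v ∧
    (G.split2 u α v β).uReach (Sum.inl u) (Sum.inl v) ∧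
    ¬ (G.split2 u α v β).uReach (Sum.inl u) (Sum.inr u) ∧
    ¬ (G.split2 u α v β).uReach (Sum.inl u) (Sum.inr v) ∧
    ¬ (G.split2 u α v β).uReach (Sum.inl v) (Sum.inr u) ∧
    ¬ (G.split2 u α v β).uReach (Sum.inl v) (Sum.inr v)

/-- The vertex set of the snarl component of `{u α, v β}`: the vertices of `G` lying in
the connected component of `u` after splitting `u α` and `v β`. -/
noncomputable def SnarlVerts (G : BDGraph V) (u : V) (α : Bool) (v : V) (β : Bool) :
    Set V :=
  {w | (G.split2 u α v β).uReach (Sum.inl u) (Sum.inl w)}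

/-- The edge set of the snarl component of `{u α, v β}`: the edges of `G` lying (after
splitting) in the connected component of `u`. -/
noncomputable def SnarlEdges (G : BDGraph V) (u : V) (α : Bool) (v : V) (β : Bool) :
    Set (Sym2 (Side V)) :=
  {e | e ∈ G.E ∧ ∀ y : Side V, y ∈ e →
      (G.split2 u α v β).uReach (Sum.inl u) (splitMap u α v β y).1}

/-- `{u α, v β}` is a snarl of `G`: separable, and minimal in the sense that the snarl
component `X` contains no vertex `w ∉ {u,v}` with vertex-sides `w γ`, `w !γ` such that
`{u α, w γ}` and `{w !γ, v β}` are both separable in `G`. -/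
noncomputable def IsSnarl (G : BDGraph V) (u : V) (α : Bool) (v : V) (β : Bool) : Prop :=
  Separable G u α v β ∧
    ¬ ∃ w ∈ SnarlVerts G u α v β, w ≠ u ∧ w ≠ v ∧
        ∃ γ : Bool, Separable G u α w γ ∧ Separable G w (!γ) v β

/-! ### Sign-consistent cutvertices and sign-cut graphs -/

/-- A cutvertex `x` of `G` is sign-consistent if `x` is a tip in `G[V(C) ∪ {x}]` for
every connected component `C` of `G − x` (components are described by a member `a`). -/
def BDGraph.SignConsistent (G : BDGraph V) (x : V) : Prop :=
  G.IsCutvertex x ∧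
    ∀ a ∈ (G.deleteVert x).verts,
      ∀ e ∈ G.E, ∀ f ∈ G.E,
        (∀ y : Side V, y ∈ e → y.1 = x ∨ (G.deleteVert x).uReach a y.1) →
        (∀ y : Side V, y ∈ f → y.1 = x ∨ (G.deleteVert x).uReach a y.1) →
        ∀ σ τ : Bool, (x, σ) ∈ e → (x, τ) ∈ f → σ = τ

open Classical in
/-- After splitting every sign-consistent vertex of `G` and relabelling, the two copies
of a sign-consistent vertex `x` are identified with the pairs `(x, true)`, `(x, false)`;
any other vertex `w` is identified with `(w, true)`.  `scKey G` sends a vertex-side to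
the copy of its vertex that it is attached to. -/
noncomputable def scKey (G : BDGraph V) : Side V → Side V :=
  fun x => if G.SignConsistent x.1 then x else (x.1, true)

lemma scKey_fst (G : BDGraph V) (y : Side V) : (scKey G y).1 = y.1 := by
  unfold scKey
  split <;> rfl

lemma scKey_idem (G : BDGraph V) (y : Side V) : scKey G (scKey G y) = scKey G y := by
  by_cases h : G.SignConsistent y.1
  · simp [scKey, h]
  · simp [scKey, h]

/-- The graph obtained from `G` by simultaneously splitting all sign-consistent
vertices (on the vertex type `V × Bool`, cf. `scKey`). -/
noncomputable def BDGraph.splitAll (G : BDGraph V) : BDGraph (Side V) where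
  verts := {p : Side V | p.1 ∈ G.verts ∧ scKey G p = p}
  E := Sym2.map (fun y : Side V => (scKey G y, y.2)) '' G.E
  wf := by
    rintro e ⟨f, hf, rfl⟩ x hx
    rw [Sym2.mem_map] at hx
    obtain ⟨y, hy, rfl⟩ := hx
    show (scKey G y).1 ∈ G.verts ∧ scKey G (scKey G y) = scKey G y
    exact ⟨by rw [scKey_fst]; exact G.wf f hf y hy, scKey_idem G y⟩

/-- `F` is a sign-cut graph of `G`: one of the graphs obtained by splitting every
sign-consistent vertex of `G` and relabelling each new vertex `y'` back to `y`;
concretely, the subgraph of `G` corresponding to a connected component of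
`G.splitAll`. -/
noncomputable def IsSignCutGraph (G F : BDGraph V) : Prop :=
  ∃ p ∈ G.splitAll.verts,
    F.verts = {w : V | ∃ σ : Bool, (w, σ) ∈ G.splitAll.verts ∧
                  G.splitAll.uReach p (w, σ)} ∧
    F.E = {e | e ∈ G.E ∧ ∀ y : Side V, y ∈ e → G.splitAll.uReach p (scKey G y)}

/-! ### Blocks -/

/-- `H` is a block of `G`: a maximal connected subgraph of `G` without a cutvertex. -/
def IsBlock (G H : BDGraph V) : Prop :=
  H.IsSubgraphOf G ∧ H.Conn ∧ (∀ x, ¬ H.IsCutvertex x) ∧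
    ∀ H' : BDGraph V, H'.IsSubgraphOf G → H.IsSubgraphOf H' → H'.Conn →
      (∀ x, ¬ H'.IsCutvertex x) → H'.verts = H.verts ∧ H'.E = H.E

/-- `H'` is a dangling block of `v` with respect to the block `H`:
a block of `G` different from `H` containing `v` with vertex-sides of opposite
signs at `v`. -/
def IsDanglingBlock (G H : BDGraph V) (v : V) (H' : BDGraph V) : Prop :=
  IsBlock G H' ∧ ¬ (H'.verts = H.verts ∧ H'.E = H.E) ∧ v ∈ H'.verts ∧
    H'.HasSide v true ∧ H'.HasSide v false

/-- `{u,v}` is a separation pair of `H`: some two other vertices of `H` are connected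
in `H` but no longer connected after removing `u` and `v`. -/
def IsSepPairB (H : BDGraph V) (u v : V) : Prop :=
  ∃ a ∈ H.verts, ∃ b ∈ H.verts, a ≠ u ∧ a ≠ v ∧ b ≠ u ∧ b ≠ v ∧
    H.uReach a b ∧ ¬ ((H.deleteVert u).deleteVert v).uReach a b

/-- `{u,v}` is a split pair of `H`: a separation pair of `H` or an edge of `H`. -/
def IsSplitPairB (H : BDGraph V) (u v : V) : Prop :=
  IsSepPairB H u v ∨ ∃ e ∈ H.E, ∃ σ τ : Bool, e = s((u, σ), (v, τ))

/-! ### Bidirected walks, paths and cycloids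

A bidirected walk `{v₁ α₁, v₂ α̂₂}, {v₂ α₂, v₃ α̂₃}, …` is encoded by the list
`[(v₁, α₁), (v₂, α₂), …]` of its *departing* sides: the first entry `(v₁, α₁)` is the
side of `v₁` on the first edge, and for `i ≥ 2` the walk arrives at `vᵢ` with sign
`!αᵢ` and departs with sign `αᵢ` (so the sign alternates at every internal vertex). -/

/-- One step of a bidirected walk, between consecutive departing sides. -/
def BStep (G : BDGraph V) (x y : Side V) : Prop :=
  s(x, (y.1, !y.2)) ∈ G.E

/-- `p` encodes a bidirected walk of `G` (at least one edge). -/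
def IsBWalk (G : BDGraph V) (p : List (Side V)) : Prop :=
  2 ≤ p.length ∧ p.Chain' (BStep G)

/-- `p` encodes a `u α`-`v β` bidirected path of `G`: a bidirected walk without
repeated vertices which starts at `u` with sign `α` and arrives at `v` with sign `β`
(so the last departing side recorded is `(v, !β)`). -/
def IsBPath (G : BDGraph V) (p : List (Side V)) (u : V) (α : Bool) (v : V) (β : Bool) :
    Prop :=
  IsBWalk G p ∧ p.head? = some (u, α) ∧ p.getLast? = some (v, !β) ∧
    (p.map Prod.fst).Nodup

/-- `G` has a cycloid: a closed bidirected walk through pairwise distinct vertices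
whose sign alternates at every vertex, except possibly at one (exceptional) vertex,
which we may take to be the starting vertex.  The closing edge either alternates at
the start vertex (`s(y, (x.1, !x.2))`) or fails to alternate there (`s(y, x)`). -/
def HasCycloid (G : BDGraph V) : Prop :=
  ∃ p : List (Side V), p ≠ [] ∧ (p.map Prod.fst).Nodup ∧ p.Chain' (BStep G) ∧
    ∃ x y : Side V, p.head? = some x ∧ p.getLast? = some y ∧
      (s(y, (x.1, !x.2)) ∈ G.E ∨ s(y, x) ∈ G.E)

/-- `G` has a cycloid with an exceptional vertex: exactly one vertex (the starting
one, after rotation) fails sign alternation. -/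
def HasExceptionalCycloid (G : BDGraph V) : Prop :=
  ∃ p : List (Side V), p ≠ [] ∧ (p.map Prod.fst).Nodup ∧ p.Chain' (BStep G) ∧
    ∃ x y : Side V, p.head? = some x ∧ p.getLast? = some y ∧ s(y, x) ∈ G.E

/-! ### Flipping a vertex -/

open Classical in
/-- Flip the sign of every vertex-side of `u`. -/
noncomputable def flipSide (u : V) : Side V → Side V :=
  fun x => if x.1 = u then (x.1, !x.2) else x

/-- The graph obtained from `G` by flipping the vertex `u` (every positive vertex-side
of `u` becomes negative and vice versa). -/
noncomputable def BDGraph.flip (G : BDGraph V) (u : V) : BDGraph V where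
  verts := G.verts
  E := Sym2.map (flipSide u) '' G.E
  wf := by
    rintro e ⟨f, hf, rfl⟩ x hx
    rw [Sym2.mem_map] at hx
    obtain ⟨y, hy, rfl⟩ := hx
    have h1 : (flipSide u y).1 = y.1 := by
      unfold flipSide
      split <;> rfl
    rw [h1]
    exact G.wf f hf y hy

/-!
Let `C` be a cycloid whose exceptional vertex `x` carries the sign `α` on both of its
cycloid edges, and let `e` be an edge. If `e` is not on `C`, then `C` survives in `G − e`.
Otherwise `C − e` is the union of two bidirected paths leaving `x` with sign `α`.
Since `x` is not a tip, it has an edge with sign `α̂`, and we walk away from `x` along it,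
leaving every new vertex with the sign it was not entered with (vertices off `C` are not
tips of `G − e`, as the ends of `e` lie on `C`). By finiteness the walk eventually meets
either itself or a vertex `z` of `C`. In the first case it closes a cycloid by itself; in
the second, returning from `z` to `x` along `C − e` closes a cycloid whose only possible
exceptional vertex is `z`.
-/

/-- The opposite vertex-side `v α̂` of `v α`. -/
def Side.opp (q : Side V) : Side V := (q.1, !q.2)

@[simp]
lemma Side.opp_fst (q : Side V) : (Side.opp q).1 = q.1 := rfl

@[simp]
lemma Side.opp_opp (q : Side V) : Side.opp (Side.opp q) = q := by
  simp [Side.opp]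

@[simp]
lemma Side.opp_ne_self (q : Side V) : Side.opp q ≠ q := by
  simp [Side.opp, Prod.ext_iff]

@[simp]
lemma Side.opp_inj {q r : Side V} : Side.opp q = Side.opp r ↔ q = r :=
  ⟨fun h => by simpa using congrArg Side.opp h, congrArg Side.opp⟩

lemma Side.eq_or_eq_opp_of_fst_eq {q r : Side V} (h : r.1 = q.1) : r = q ∨ r = Side.opp q :=
  (Bool.eq_or_eq_not r.2 q.2).imp (Prod.ext h) (Prod.ext h)

lemma Side.opp_not_mem {l : List (Side V)} (hnd : (l.map Prod.fst).Nodup) {q : Side V}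
    (hq : q ∈ l) : Side.opp q ∉ l := fun h =>
  Side.opp_ne_self q (List.inj_on_of_nodup_map hnd h hq rfl)

lemma bStep_iff {G : BDGraph V} {a b : Side V} : BStep G a b ↔ s(a, Side.opp b) ∈ G.E :=
  Iff.rfl

lemma BStep.reverse {G : BDGraph V} {a b : Side V} (h : BStep G a b) :
    BStep G (Side.opp b) (Side.opp a) := by
  rwa [bStep_iff, Side.opp_opp, Sym2.eq_swap]

/-- In the departing-side encoding, reversing a walk also flips every sign. -/
def reverseWalk (l : List (Side V)) : List (Side V) := (l.map Side.opp).reverse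

lemma isChain_reverseWalk {G : BDGraph V} {l : List (Side V)} (h : l.IsChain (BStep G)) :
    (reverseWalk l).IsChain (BStep G) :=
  List.isChain_reverse.2 <| (List.isChain_map _).2 <| h.imp fun _ _ => BStep.reverse

lemma map_fst_reverseWalk (l : List (Side V)) :
    (reverseWalk l).map Prod.fst = (l.map Prod.fst).reverse := by
  simp [reverseWalk, Function.comp_def]

lemma head?_reverseWalk (l : List (Side V)) :
    (reverseWalk l).head? = l.getLast?.map Side.opp := by
  simp [reverseWalk, List.getLast?_map]

lemma getLast?_reverseWalk (l : List (Side V)) :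
    (reverseWalk l).getLast? = l.head?.map Side.opp := by
  simp [reverseWalk]

lemma eq_of_step_eq {l : List (Side V)} (hnd : (l.map Prod.fst).Nodup) {a b c d : Side V}
    (ha : a ∈ l) (hb : b ∈ l) (hcd : c ∈ l ∨ d ∈ l)
    (h : s(a, Side.opp b) = s(c, Side.opp d)) : a = c ∧ b = d := by
  rcases Sym2.eq_iff.1 h with ⟨hac, hbd⟩ | ⟨had, hbc⟩
  · exact ⟨hac, Side.opp_inj.1 hbd⟩
  · exfalso
    rcases hcd with hc | hd
    · exact Side.opp_not_mem hnd hb (hbc ▸ hc)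
    · exact Side.opp_not_mem hnd hd (had ▸ ha)

lemma isChain_deleteEdge {G : BDGraph V} {l : List (Side V)} (hch : l.IsChain (BStep G))
    (hnd : (l.map Prod.fst).Nodup) {c d : Side V} (hcd : c ∈ l ∨ d ∈ l)
    (hncd : c ∉ l ∨ d ∉ l) : l.IsChain (BStep (G.deleteEdge s(c, Side.opp d))) := by
  refine hch.imp_of_mem_imp fun a b ha hb hab => ⟨hab, fun he => ?_⟩
  obtain ⟨rfl, rfl⟩ := eq_of_step_eq hnd ha hb hcd he
  tauto

lemma hasSide_deleteEdge_of_not_isTip {G : BDGraph V} {v : V} (hv : ¬ G.IsTip v) {σ : Bool}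
    {e : Sym2 (Side V)} (hve : (v, σ) ∉ e) : (G.deleteEdge e).HasSide v σ := by
  have hside : G.HasSide v σ := by
    by_contra hno
    refine hv fun f hf g hg τ hτ hτ' => hno ?_
    rcases Bool.eq_or_eq_not τ σ with rfl | rfl
    exacts [⟨f, hf, hτ⟩, ⟨g, hg, by simpa using hτ'⟩]
  obtain ⟨f, hf, hvf⟩ := hside
  exact ⟨f, ⟨hf, fun hfe => hve (Set.mem_singleton_iff.1 hfe ▸ hvf)⟩, hvf⟩

theorem hasCycloid_of_closing_edge {H : BDGraph V} {W : List (Side V)} {w z : Side V}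
    (hch : W.IsChain (BStep H)) (hnd : (W.map Prod.fst).Nodup) (hw : W.getLast? = some w)
    (hwz : s(w, z) ∈ H.E) (hz : z.1 ∈ W.map Prod.fst) : HasCycloid H := by
  obtain ⟨q, hq, hqz⟩ := List.mem_map.1 hz
  obtain ⟨M₁, M₂, rfl⟩ := List.append_of_mem hq
  refine ⟨q :: M₂, List.cons_ne_nil _ _, ?_, hch.suffix (List.suffix_append _ _), q, w, rfl,
    by simpa [List.getLast?_append] using hw, ?_⟩
  · exact hnd.sublist ((List.sublist_append_right _ _).map _)
  · rcases Side.eq_or_eq_opp_of_fst_eq hqz.symm with rfl | rfl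
    exacts [Or.inr hwz, Or.inl hwz]

theorem exists_escape_walk {H : BDGraph V} (hfin : H.verts.Finite) {S : Set V}
    (hnt : ∀ v ∉ S, ∀ σ, H.HasSide v σ → H.HasSide v (!σ)) (W : List (Side V)) (w : Side V)
    (hch : W.IsChain (BStep H)) (hnd : (W.map Prod.fst).Nodup) (hw : W.getLast? = some w)
    (hside : H.HasSide w.1 w.2) :
    HasCycloid H ∨ ∃ (U : List (Side V)) (w' z : Side V), (W ++ U).IsChain (BStep H) ∧
      ((W ++ U).map Prod.fst).Nodup ∧ (∀ q ∈ U, q.1 ∉ S) ∧ (W ++ U).getLast? = some w' ∧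
      z.1 ∈ S ∧ s(w', z) ∈ H.E := by
  obtain ⟨n, hn⟩ : ∃ n, (H.verts \ {v | v ∈ W.map Prod.fst}).ncard = n := ⟨_, rfl⟩
  induction n using Nat.strong_induction_on generalizing W w with
  | _ n ih =>
  obtain ⟨g, hg, hwg⟩ := hside
  obtain ⟨z, rfl⟩ := Sym2.mem_iff_exists.1 hwg
  by_cases hzW : z.1 ∈ W.map Prod.fst
  · exact Or.inl (hasCycloid_of_closing_edge hch hnd hw hg hzW)
  by_cases hzS : z.1 ∈ S
  · exact Or.inr ⟨[], w, z, by simpa, by simpa, by simp, by simpa, hzS, hg⟩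
  have hz : z ∈ s(w, z) := Sym2.mem_mk_right _ _
  have hlt : (H.verts \ {v | v ∈ (W ++ [Side.opp z]).map Prod.fst}).ncard < n := by
    have hdiff : H.verts \ {v | v ∈ (W ++ [Side.opp z]).map Prod.fst} =
        (H.verts \ {v | v ∈ W.map Prod.fst}) \ {z.1} := by
      ext v
      simp only [List.map_append, List.map_cons, List.map_nil, Side.opp_fst, List.mem_append,
        List.mem_singleton, Set.mem_sdiff, Set.mem_ofPred_eq, Set.mem_singleton_iff]
      tauto
    rw [hdiff, ← hn]
    exact Set.ncard_sdiff_singleton_lt_of_mem ⟨H.wf _ hg z hz, hzW⟩ (hfin.subset Set.sdiff_subset)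
  have hch' : (W ++ [Side.opp z]).IsChain (BStep H) :=
    List.isChain_append.2 ⟨hch, List.isChain_singleton _, by
      rintro _ hw' _ ⟨⟩
      cases hw.symm.trans hw'
      rwa [bStep_iff, Side.opp_opp]⟩
  have hnd' : ((W ++ [Side.opp z]).map Prod.fst).Nodup := by
    rw [List.map_append, List.map_singleton, Side.opp_fst]
    exact hnd.append (List.nodup_singleton _) (List.disjoint_singleton.2 hzW)
  rcases ih _ hlt _ (Side.opp z) hch' hnd' List.getLast?_concat
      (hnt z.1 hzS z.2 ⟨_, hg, hz⟩) rfl with h | ⟨U, w', z', h⟩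
  · exact Or.inl h
  · refine Or.inr ⟨Side.opp z :: U, w', z', ?_⟩
    simpa [hzS] using h

theorem hasCycloid_of_rooted_paths {H : BDGraph V} (hfin : H.verts.Finite) {S : Set V}
    (hnt : ∀ v ∉ S, ∀ σ, H.HasSide v σ → H.HasSide v (!σ)) {x : Side V}
    (hx : H.HasSide x.1 (!x.2))
    (hpaths : ∀ z ∈ S, ∃ Q : List (Side V), Q.IsChain (BStep H) ∧ (Q.map Prod.fst).Nodup ∧
      (∀ v ∈ Q.map Prod.fst, v ∈ S) ∧ Q.head? = some x ∧ z ∈ Q.map Prod.fst) :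
    HasCycloid H := by
  rcases exists_escape_walk hfin hnt [Side.opp x] (Side.opp x) (List.isChain_singleton _)
      (by simp) rfl hx with h | ⟨U, w, z, hch, hnd, hU, hw, hzS, hwz⟩
  · exact h
  obtain ⟨Q, hQch, hQnd, hQS, hQx, hzQ⟩ := hpaths z.1 hzS
  have hRx : (reverseWalk Q).getLast? = some (Side.opp x) := by
    simp [getLast?_reverseWalk, hQx]
  refine hasCycloid_of_closing_edge (W := reverseWalk Q ++ U) ?_ ?_ ?_ hwz ?_
  · refine List.isChain_append.2
      ⟨isChain_reverseWalk hQch, hch.suffix (List.suffix_append _ _), ?_⟩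
    rintro _ ha b hb
    cases hRx.symm.trans ha
    exact (List.isChain_cons.1 (hch : (Side.opp x :: U).IsChain (BStep H))).1 b hb
  · rw [List.map_append, map_fst_reverseWalk]
    refine List.nodup_append.2 ⟨List.nodup_reverse.2 hQnd, ?_, ?_⟩
    · exact (List.nodup_cons.1 (by simpa using hnd)).2
    · rintro v hv _ hv' rfl
      obtain ⟨q, hq, rfl⟩ := List.mem_map.1 hv'
      exact hU q hq (hQS _ (List.mem_reverse.1 hv))
  · rw [List.getLast?_append, hRx, ← hw, List.getLast?_append]
    rfl
  · simp [map_fst_reverseWalk, hzQ]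

theorem hasCycloid_of_two_paths {H : BDGraph V} (hfin : H.verts.Finite)
    {A B : List (Side V)} {x : Side V} (hA : A.IsChain (BStep H)) (hB : B.IsChain (BStep H))
    (hAnd : (A.map Prod.fst).Nodup) (hBnd : (B.map Prod.fst).Nodup)
    (hAx : A.head? = some x) (hBx : B.getLast? = some (Side.opp x))
    (hnt : ∀ v, v ∉ A.map Prod.fst → v ∉ B.map Prod.fst →
      ∀ σ, H.HasSide v σ → H.HasSide v (!σ))
    (hx : H.HasSide x.1 (!x.2)) : HasCycloid H := by
  refine hasCycloid_of_rooted_paths hfin (S := {v | v ∈ A.map Prod.fst ∨ v ∈ B.map Prod.fst})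
    (fun v hv => hnt v (hv <| .inl ·) (hv <| .inr ·)) hx ?_
  rintro z (hz | hz)
  · exact ⟨A, hA, hAnd, fun v => .inl, hAx, hz⟩
  · refine ⟨reverseWalk B, isChain_reverseWalk hB, ?_, ?_, ?_, ?_⟩ <;>
      simp_all [map_fst_reverseWalk, head?_reverseWalk]

/-- `x :: pt ++ [Side.opp x]` walks once around a cycloid with exceptional vertex `x.1`,
entering `x.1` again through the closing edge. -/
lemma nodup_map_fst_of_cycle_eq_append {x : Side V} {pt A B : List (Side V)}
    (hnd : ((x :: pt).map Prod.fst).Nodup) (hAB : x :: pt ++ [Side.opp x] = A ++ B)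
    (hA : A ≠ []) (hB : B ≠ []) : (A.map Prod.fst).Nodup ∧ (B.map Prod.fst).Nodup := by
  constructor
  · have hp : x :: pt = A ++ B.dropLast := by
      have h := congrArg List.dropLast hAB
      rwa [List.dropLast_concat, List.dropLast_append_of_ne_nil hB] at h
    exact hnd.sublist ((hp ▸ List.sublist_append_left _ _).map _)
  · have hpt : pt ++ [Side.opp x] = A.tail ++ B := by
      have h := congrArg List.tail hAB
      rwa [List.tail_append_of_ne_nil (xs := A) hA] at h
    have hptnd : ((pt ++ [Side.opp x]).map Prod.fst).Nodup := by
      obtain ⟨hxpt, hptnd⟩ := List.nodup_cons.1 hnd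
      rw [List.map_append, List.map_singleton, Side.opp_fst]
      exact hptnd.append (List.nodup_singleton _) (List.disjoint_singleton.2 hxpt)
    exact hptnd.sublist ((hpt ▸ List.sublist_append_right _ _ : List.Sublist B _).map _)

theorem hasCycloid_deleteEdge_of_cycle_split {G : BDGraph V} (hfin : G.verts.Finite)
    (hnotip : ∀ v ∈ G.verts, ¬ G.IsTip v) {p m₁ m₂ : List (Side V)} {x a b : Side V}
    (hnd : (p.map Prod.fst).Nodup) (hx : p.head? = some x) (hxG : x.1 ∈ G.verts)
    (hW : (p ++ [Side.opp x]).IsChain (BStep G))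
    (hsplit : p ++ [Side.opp x] = m₁ ++ a :: b :: m₂) :
    HasCycloid (G.deleteEdge s(a, Side.opp b)) := by
  obtain ⟨pt, rfl⟩ := List.head?_eq_some_iff.1 hx
  have hAB : x :: pt ++ [Side.opp x] = (m₁ ++ [a]) ++ b :: m₂ := by simp [hsplit]
  obtain ⟨hAnd, hBnd⟩ := nodup_map_fst_of_cycle_eq_append hnd hAB (by simp) (by simp)
  have hWnd : (x :: pt ++ [Side.opp x]).Nodup :=
    hnd.of_map.append (List.nodup_singleton _)
      (List.disjoint_singleton.2 (Side.opp_not_mem hnd List.mem_cons_self))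
  have hdisj : ∀ q ∈ m₁ ++ [a], ∀ r ∈ b :: m₂, q ≠ r := (List.nodup_append.1 (hAB ▸ hWnd)).2.2
  have hAx : (m₁ ++ [a]).head? = some x := by
    simpa [List.head?_append] using (congrArg List.head? hAB).symm
  have hBx : (b :: m₂).getLast? = some (Side.opp x) := by
    have h := congrArg List.getLast? hAB
    rwa [List.getLast?_concat, List.getLast?_append_of_ne_nil _ (List.cons_ne_nil _ _),
      eq_comm] at h
  have ha : a ∈ m₁ ++ [a] := by simp
  have hb : b ∈ b :: m₂ := List.mem_cons_self
  have hA := isChain_deleteEdge (hW.prefix ⟨_, hAB.symm⟩) hAnd (.inl ha)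
    (.inr fun h => hdisj b h b hb rfl)
  have hB := isChain_deleteEdge (hW.suffix ⟨_, hAB.symm⟩) hBnd (.inr hb)
    (.inl fun h => hdisj a ha a h rfl)
  refine hasCycloid_of_two_paths hfin hA hB hAnd hBnd hAx hBx ?_ ?_
  · rintro v hvA hvB σ ⟨f, hf, hvf⟩
    refine hasSide_deleteEdge_of_not_isTip (hnotip v (G.wf f hf.1 _ hvf)) ?_
    rw [Sym2.mem_iff]
    rintro (h | h)
    · exact hvA (List.mem_map.2 ⟨a, ha, by rw [← h]⟩)
    · exact hvB (List.mem_map.2 ⟨b, hb, by rw [← Side.opp_fst b, ← h]⟩)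
  · refine hasSide_deleteEdge_of_not_isTip (hnotip x.1 hxG) ?_
    rw [Sym2.mem_iff]
    rintro (h | h)
    · exact hdisj a ha _ (List.mem_of_getLast? hBx) h.symm
    · exact hdisj x (List.mem_of_head? hAx) b hb (Side.opp_inj.1 h)

/-- Let `G` be a (finite) bidirected graph without tips.  If `G` has
a cycloid with an exceptional vertex, then `G` has no feedback edge: for every edge
`e` of `G`, the graph `G − e` still contains a cycloid. -/
theorem statement_18 (G : BDGraph V) (hfin : G.verts.Finite)
    (hnotip : ∀ v ∈ G.verts, ¬ G.IsTip v)
    (hc : HasExceptionalCycloid G) :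
    ∀ e ∈ G.E, HasCycloid (G.deleteEdge e) := by
  obtain ⟨p, hpne, hnd, hch, x, y, hx, hy, hyx⟩ := hc
  rintro e -
  have hW : (p ++ [Side.opp x]).IsChain (BStep G) :=
    List.isChain_append.2 ⟨hch, List.isChain_singleton _, by
      rintro _ hy' _ ⟨⟩
      cases hy.symm.trans hy'
      rwa [bStep_iff, Side.opp_opp]⟩
  by_cases hWe : (p ++ [Side.opp x]).IsChain (BStep (G.deleteEdge e))
  · obtain ⟨hpe, -, hye⟩ := List.isChain_append.1 hWe
    have hyx' := hye y hy _ rfl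
    rw [bStep_iff, Side.opp_opp] at hyx'
    exact ⟨p, hpne, hnd, hpe, x, y, hx, hy, .inr hyx'⟩
  · obtain ⟨a, b, m₁, m₂, hsplit, hab⟩ : ∃ a b m₁ m₂, p ++ [Side.opp x] = m₁ ++ a :: b :: m₂ ∧
        ¬ BStep (G.deleteEdge e) a b := by
      have h := mt List.isChain_iff_forall_rel_of_append_cons_cons.2 hWe
      push Not at h
      exact h
    obtain rfl : e = s(a, Side.opp b) := by
      by_contra hne
      exact hab ⟨List.isChain_iff_forall_rel_of_append_cons_cons.1 hW hsplit, Ne.symm hne⟩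
    exact hasCycloid_deleteEdge_of_cycle_split hfin hnotip hnd hx
      (G.wf _ hyx x (Sym2.mem_mk_right _ _)) hW hsplit

end Paper
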